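/- Let d > 0. Then for every μ ∈ ℂ with |Im μ| ≤ d and every x ∈ [0,1], one has |L(x,μ)| ≤ 2 e^{4d} ‖σ₁‖_{L¹[0,1]} α̃(μ), where L(x,μ) = ∫₀ˣ e^{2iμ(x−t)} σ₁(t) ∫₀ᵗ σ₂(s) ∫₀ˢ e^{2iμ(s−τ)} σ₁(τ) ∫₀^τ e^{2iμy} σ₂(y) dy dτ ds dt. -/

import Mathlib

open MeasureTheory Set
open scoped ENNReal

noncomputable section

/-- The integral operator `K₁` associated with the Dirac system. -/
def K1 (σ₁ σ₂ : ℝ → ℂ) (μ : ℂ) (z : ℝ → ℂ) : ℝ → ℂ := fun x =>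
  ∫ t in (0:ℝ)..x, σ₁ t * ∫ s in t..(1:ℝ),
    Complex.exp (2 * Complex.I * μ * (s - t)) * σ₂ s * z s

/-- The integral operator `K₂` associated with the Dirac system. -/
def K2 (σ₁ σ₂ : ℝ → ℂ) (μ : ℂ) (z : ℝ → ℂ) : ℝ → ℂ := fun x =>
  ∫ t in x..(1:ℝ), σ₂ t * ∫ s in (0:ℝ)..t,
    Complex.exp (2 * Complex.I * μ * (t - s)) * σ₁ s * z s

/-- `γ₀₁(x,μ) = |∫₀ˣ e^{2iμ(x−t)} σ₁(t) dt|`. -/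
def gamma01 (σ₁ : ℝ → ℂ) (μ : ℂ) (x : ℝ) : ℝ :=
  ‖∫ t in (0:ℝ)..x, Complex.exp (2 * Complex.I * μ * (x - t)) * σ₁ t‖

/-- `γ₀₂(x,μ) = |∫ₓ¹ e^{2iμ(t−x)} σ₂(t) dt|`. -/
def gamma02 (σ₂ : ℝ → ℂ) (μ : ℂ) (x : ℝ) : ℝ :=
  ‖∫ t in x..(1:ℝ), Complex.exp (2 * Complex.I * μ * (t - x)) * σ₂ t‖

/-- `γ₁(μ) = ‖γ₀₁(·,μ)‖_{L^q[0,1]}`. -/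
def gamma1 (σ₁ : ℝ → ℂ) (q : ℝ≥0∞) (μ : ℂ) : ℝ :=
  (eLpNorm (fun x => gamma01 σ₁ μ x) q (volume.restrict (Icc (0:ℝ) 1))).toReal

/-- `γ₂(μ) = ‖γ₀₂(·,μ)‖_{L^q[0,1]}`. -/
def gamma2 (σ₂ : ℝ → ℂ) (q : ℝ≥0∞) (μ : ℂ) : ℝ :=
  (eLpNorm (fun x => gamma02 σ₂ μ x) q (volume.restrict (Icc (0:ℝ) 1))).toReal

/-- `γ̃(μ) = ∫₀¹ |σ₂| γ₀₁² + ∫₀¹ |σ₁| γ₀₂²`. -/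
def gammaT (σ₁ σ₂ : ℝ → ℂ) (μ : ℂ) : ℝ :=
  (∫ s in (0:ℝ)..1, ‖σ₂ s‖ * (gamma01 σ₁ μ s) ^ 2)
    + ∫ s in (0:ℝ)..1, ‖σ₁ s‖ * (gamma02 σ₂ μ s) ^ 2

/-- `‖σ‖_{L^p[0,1]}` where `σ(x) = max(|σ₁(x)|,|σ₂(x)|)`. -/
def sigmaNorm (σ₁ σ₂ : ℝ → ℂ) (p : ℝ≥0∞) : ℝ :=
  (eLpNorm (fun x => max ‖σ₁ x‖ ‖σ₂ x‖) p (volume.restrict (Icc (0:ℝ) 1))).toReal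

/-- The constant function `1` on `[0,1]`. -/
def eFun : ℝ → ℂ := fun _ => 1

/-- A solution of the Dirac system `y₁' + σ₁ y₂ = iμ y₁`, `y₂' + σ₂ y₁ = −iμ y₂` on `[0,1]`,
with `y₁, y₂` absolutely continuous (i.e. in `W^{1,1}[0,1]`, so each is the indefinite
integral of an integrable function, and the equations hold a.e. with those derivatives). -/
def IsDiracSolution (σ₁ σ₂ : ℝ → ℂ) (μ : ℂ) (y₁ y₂ : ℝ → ℂ) : Prop :=
  ∃ g₁ g₂ : ℝ → ℂ,
    IntervalIntegrable g₁ volume 0 1 ∧ IntervalIntegrable g₂ volume 0 1 ∧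
    (∀ x ∈ Icc (0:ℝ) 1, y₁ x = y₁ 0 + ∫ t in (0:ℝ)..x, g₁ t) ∧
    (∀ x ∈ Icc (0:ℝ) 1, y₂ x = y₂ 0 + ∫ t in (0:ℝ)..x, g₂ t) ∧
    (∀ᵐ x ∂(volume.restrict (Icc (0:ℝ) 1)),
      g₁ x + σ₁ x * y₂ x = Complex.I * μ * y₁ x) ∧
    (∀ᵐ x ∂(volume.restrict (Icc (0:ℝ) 1)),
      g₂ x + σ₂ x * y₁ x = -(Complex.I * μ) * y₂ x)

/-- The quadruple integral `L(x,μ)`. -/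
def Lfun (σ₁ σ₂ : ℝ → ℂ) (μ : ℂ) (x : ℝ) : ℂ :=
  ∫ t in (0:ℝ)..x, Complex.exp (2*Complex.I*μ*(x - t)) * σ₁ t *
    ∫ s in (0:ℝ)..t, σ₂ s *
      ∫ τ in (0:ℝ)..s, Complex.exp (2*Complex.I*μ*(s - τ)) * σ₁ τ *
        ∫ y in (0:ℝ)..τ, Complex.exp (2*Complex.I*μ*y) * σ₂ y

/-- `α₀(x,μ)`. -/
def alpha0 (σ₁ σ₂ : ℝ → ℂ) (μ : ℂ) (x : ℝ) : ℝ :=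
  (‖∫ t in (0:ℝ)..x, Complex.exp (-(2*Complex.I*μ*t)) * σ₁ t‖
      + ‖∫ t in (0:ℝ)..x, Complex.exp (2*Complex.I*μ*t) * σ₁ t‖)
    + (‖∫ t in (0:ℝ)..x, Complex.exp (-(2*Complex.I*μ*t)) * σ₂ t‖
      + ‖∫ t in (0:ℝ)..x, Complex.exp (2*Complex.I*μ*t) * σ₂ t‖)

/-- `α̃(μ) = ∫₀¹ σ(s) α₀(s,μ)² ds` with `σ = max(|σ₁|,|σ₂|)`. -/
def alphaT (σ₁ σ₂ : ℝ → ℂ) (μ : ℂ) : ℝ :=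
  ∫ s in (0:ℝ)..1, (max ‖σ₁ s‖ ‖σ₂ s‖) * (alpha0 σ₁ σ₂ μ s)^2

/-!
Write `A(s) = ∫₀ˢ e^{2iμy} σ₂(y) dy`. Splitting `e^{2iμ(s−τ)} = e^{2iμs} e^{−2iμτ}`, the inner
integrals of `L` form `F(t) = ∫₀ᵗ A'(s) B(s) ds` with `B' = e^{−2iμ·} σ₁ A`, and Fubini on the
triangle (integration by parts for primitives) gives `F = A B − ∫₀ᵗ e^{−2iμs} σ₁ A²`. In the strip
every exponential is at most `e^{2d}`, so `|F(t)| ≤ e^{2d} (|A(t)| J + K)` with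
`J = ∫₀¹ |σ₁| |A|` and `K = ∫₀¹ |σ₁| |A|²`. Integrating against `e^{2d} |σ₁|` gives
`|L| ≤ e^{4d} (J² + ‖σ₁‖₁ K) ≤ 2 e^{4d} ‖σ₁‖₁ K` by Cauchy–Schwarz, and `K ≤ α̃` since `|A| ≤ α₀`.
-/

section ProdSections

variable {α β 𝕜 : Type*} [MeasurableSpace α] [MeasurableSpace β] {μ : Measure α} {ν : Measure β}
  [SFinite μ] [SFinite ν] [RCLike 𝕜] {u : α → 𝕜} {v : β → 𝕜} {S : Set (α × β)}

theorem integral_mul_setIntegral_preimage_prodMk_left (hS : MeasurableSet S)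
    (hu : Integrable u μ) (hv : Integrable v ν) :
    ∫ x, u x * ∫ y in Prod.mk x ⁻¹' S, v y ∂ν ∂μ = ∫ p in S, u p.1 * v p.2 ∂μ.prod ν := by
  rw [← integral_indicator hS, integral_prod _ ((hu.mul_prod hv).indicator hS)]
  refine integral_congr_ae (ae_of_all _ fun x => ?_)
  dsimp only
  rw [← integral_const_mul, ← integral_indicator (measurable_prodMk_left hS)]
  rfl

theorem integral_mul_setIntegral_preimage_prodMk_right (hS : MeasurableSet S)
    (hu : Integrable u μ) (hv : Integrable v ν) :
    ∫ y, v y * ∫ x in (·, y) ⁻¹' S, u x ∂μ ∂ν = ∫ p in S, u p.1 * v p.2 ∂μ.prod ν := by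
  rw [← integral_indicator hS, integral_prod_symm _ ((hu.mul_prod hv).indicator hS)]
  refine integral_congr_ae (ae_of_all _ fun y => ?_)
  dsimp only
  rw [← integral_const_mul, ← integral_indicator (measurable_prodMk_right hS)]
  simp_rw [mul_comm (v y)]
  rfl

end ProdSections

section WeightedCauchySchwarz

variable {α : Type*} [MeasurableSpace α] {μ : Measure α} {w h : α → ℝ}

theorem sq_integral_mul_le_integral_mul_integral_mul_sq (hw : 0 ≤ᵐ[μ] w) (hwi : Integrable w μ)
    (hwh : Integrable (fun x => w x * h x) μ) (hwh2 : Integrable (fun x => w x * h x ^ 2) μ) :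
    (∫ x, w x * h x ∂μ) ^ 2 ≤ (∫ x, w x ∂μ) * ∫ x, w x * h x ^ 2 ∂μ := by
  have hquad : ∀ c : ℝ, 0 ≤ (∫ x, w x ∂μ) * (c * c) + (-2 * ∫ x, w x * h x ∂μ) * c
      + ∫ x, w x * h x ^ 2 ∂μ := fun c => by
    have hexpand : ∫ x, w x * (h x - c) ^ 2 ∂μ = (∫ x, w x ∂μ) * (c * c)
        + (-2 * ∫ x, w x * h x ∂μ) * c + ∫ x, w x * h x ^ 2 ∂μ := by
      rw [integral_congr_ae (ae_of_all _ fun x => show w x * (h x - c) ^ 2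
          = c * c * w x + -2 * c * (w x * h x) + w x * h x ^ 2 by ring),
        integral_add _ hwh2, integral_add (hwi.const_mul _) (hwh.const_mul _),
        integral_const_mul, integral_const_mul]
      · ring
      · exact (hwi.const_mul _).add (hwh.const_mul _)
    rw [← hexpand]
    exact integral_nonneg_of_ae (hw.mono fun x hx => mul_nonneg hx (sq_nonneg _))
  have hdiscr := discrim_le_zero hquad
  rw [discrim] at hdiscr
  linarith

end WeightedCauchySchwarz

namespace intervalIntegral

theorem integral_mul_primitive_add_integral_mul_primitive {𝕜 : Type*} [RCLike 𝕜]
    {u v : ℝ → 𝕜} {a b : ℝ} (hab : a ≤ b)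
    (hu : IntervalIntegrable u volume a b) (hv : IntervalIntegrable v volume a b) :
    (∫ s in a..b, u s * ∫ y in a..s, v y) + (∫ s in a..b, v s * ∫ y in a..s, u y)
      = (∫ s in a..b, u s) * ∫ s in a..b, v s := by
  set ν := volume.restrict (Ioc a b)
  have hu' : Integrable u ν := (intervalIntegrable_iff_integrableOn_Ioc_of_le hab).mp hu
  have hv' : Integrable v ν := (intervalIntegrable_iff_integrableOn_Ioc_of_le hab).mp hv
  have hS : MeasurableSet {p : ℝ × ℝ | p.2 ≤ p.1} := measurableSet_le measurable_snd measurable_fst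
  have h₁ : ∫ s in a..b, u s * ∫ y in a..s, v y
      = ∫ p in {p : ℝ × ℝ | p.2 ≤ p.1}, u p.1 * v p.2 ∂ν.prod ν := by
    rw [← integral_mul_setIntegral_preimage_prodMk_left hS hu' hv', integral_of_le hab]
    refine setIntegral_congr_fun measurableSet_Ioc fun s hs => ?_
    change _ = u s * ∫ y in Iic s, v y ∂ν
    rw [integral_of_le hs.1.le, Measure.restrict_restrict measurableSet_Iic,
      Iic_inter_Ioc_of_le hs.2]
  -- The complement misses the diagonal: its sections are `Ioo a s` instead of `Ioc a s`.
  have h₂ : ∫ s in a..b, v s * ∫ y in a..s, u y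
      = ∫ p in {p : ℝ × ℝ | p.2 ≤ p.1}ᶜ, u p.1 * v p.2 ∂ν.prod ν := by
    rw [← integral_mul_setIntegral_preimage_prodMk_right hS.compl hu' hv', integral_of_le hab]
    refine setIntegral_congr_fun measurableSet_Ioc fun s hs => ?_
    have hsection : (·, s) ⁻¹' {p : ℝ × ℝ | p.2 ≤ p.1}ᶜ = Iio s := by ext; simp
    rw [integral_of_le hs.1.le, hsection, Measure.restrict_restrict measurableSet_Iio,
      show Iio s ∩ Ioc a b = Ioo a s by grind, integral_Ioc_eq_integral_Ioo]
  rw [h₁, h₂, integral_add_compl hS (hu'.mul_prod hv'), integral_prod_mul, integral_of_le hab,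
    integral_of_le hab]

variable {a b t : ℝ}

theorem integral_mul_mul_integral_add_integral_le {w h : ℝ → ℝ} (hab : a ≤ b)
    (hw : ∀ s ∈ Icc a b, 0 ≤ w s) (hwi : IntervalIntegrable w volume a b)
    (hh : ContinuousOn h (uIcc a b)) :
    ∫ s in a..b, w s * (h s * (∫ y in a..b, w y * h y) + ∫ y in a..b, w y * h y ^ 2)
      ≤ 2 * (∫ s in a..b, w s) * ∫ s in a..b, w s * h s ^ 2 := by
  have hwh : IntervalIntegrable (fun s => w s * h s) volume a b := hwi.mul_continuousOn hh
  have hwh2 : IntervalIntegrable (fun s => w s * h s ^ 2) volume a b :=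
    hwi.mul_continuousOn (hh.pow 2)
  have hCS : (∫ s in a..b, w s * h s) ^ 2 ≤ (∫ s in a..b, w s) * ∫ s in a..b, w s * h s ^ 2 := by
    simp only [integral_of_le hab]
    exact sq_integral_mul_le_integral_mul_integral_mul_sq
      ((ae_restrict_mem measurableSet_Ioc).mono fun s hs => hw s (Ioc_subset_Icc_self hs))
      (hwi.1) hwh.1 hwh2.1
  set J := ∫ y in a..b, w y * h y
  set K := ∫ y in a..b, w y * h y ^ 2
  have hsplit : ∫ s in a..b, w s * (h s * J + K) = J ^ 2 + (∫ s in a..b, w s) * K := by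
    rw [integral_congr fun s _ => show w s * (h s * J + K) = w s * h s * J + w s * K by ring,
      integral_add (hwh.mul_const _) (hwi.mul_const _), integral_mul_const, integral_mul_const]
    ring
  linarith

theorem norm_integral_le_integral_of_norm_le_of_le {E : Type*} [NormedAddCommGroup E]
    [NormedSpace ℝ E] {F : ℝ → E} {G : ℝ → ℝ} (hat : a ≤ t)
    (htb : t ≤ b) (hG : IntervalIntegrable G volume a b) (hFG : ∀ s ∈ Icc a b, ‖F s‖ ≤ G s) :
    ‖∫ s in a..t, F s‖ ≤ ∫ s in a..b, G s := by
  have hsub : uIcc a t ⊆ uIcc a b :=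
    uIcc_subset_uIcc_left (by simp [uIcc_of_le (hat.trans htb), hat, htb])
  calc ‖∫ s in a..t, F s‖ ≤ ∫ s in a..t, G s :=
        norm_integral_le_of_norm_le hat
          (ae_of_all _ fun s hs => hFG s ⟨hs.1.le, hs.2.trans htb⟩) (hG.mono_set hsub)
    _ ≤ ∫ s in a..b, G s :=
        integral_mono_interval le_rfl hat htb
          ((ae_restrict_mem measurableSet_Ioc).mono fun s hs =>
            (norm_nonneg _).trans (hFG s (Ioc_subset_Icc_self hs))) hG

theorem norm_integral_mul_integral_mul_primitive_le {𝕜 : Type*} [RCLike 𝕜] {f g : ℝ → 𝕜} {w : ℝ → ℝ}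
    (hat : a ≤ t) (htb : t ≤ b) (hf : IntervalIntegrable f volume a b)
    (hg : IntervalIntegrable g volume a b) (hw : IntervalIntegrable w volume a b)
    (hgw : ∀ s ∈ Icc a b, ‖g s‖ ≤ w s) :
    ‖∫ s in a..t, f s * ∫ τ in a..s, g τ * ∫ y in a..τ, f y‖
      ≤ ‖∫ y in a..t, f y‖ * (∫ s in a..b, w s * ‖∫ y in a..s, f y‖)
        + ∫ s in a..b, w s * ‖∫ y in a..s, f y‖ ^ 2 := by
  set A := fun s => ∫ y in a..s, f y
  have hA : ContinuousOn A (uIcc a b) := continuousOn_primitive_interval' hf left_mem_uIcc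
  have hsub : uIcc a t ⊆ uIcc a b :=
    uIcc_subset_uIcc_left (by simp [uIcc_of_le (hat.trans htb), hat, htb])
  have hgA : IntervalIntegrable (fun s => g s * A s) volume a b := hg.mul_continuousOn hA
  have hparts : ∫ s in a..t, f s * ∫ τ in a..s, g τ * A τ
      = A t * (∫ s in a..t, g s * A s) - ∫ s in a..t, g s * A s * A s :=
    eq_sub_of_add_eq (integral_mul_primitive_add_integral_mul_primitive hat
      (hf.mono_set hsub) (hgA.mono_set hsub))
  have hB : ‖∫ s in a..t, g s * A s‖ ≤ ∫ s in a..b, w s * ‖A s‖ :=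
    norm_integral_le_integral_of_norm_le_of_le hat htb (hw.mul_continuousOn hA.norm)
      fun s hs => by rw [norm_mul]; gcongr; exact hgw s hs
  have hC : ‖∫ s in a..t, g s * A s * A s‖ ≤ ∫ s in a..b, w s * ‖A s‖ ^ 2 :=
    norm_integral_le_integral_of_norm_le_of_le hat htb (hw.mul_continuousOn (hA.norm.pow 2))
      fun s hs => by rw [norm_mul, norm_mul, mul_assoc, ← sq]; gcongr; exact hgw s hs
  calc ‖∫ s in a..t, f s * ∫ τ in a..s, g τ * A τ‖
      ≤ ‖A t‖ * ‖∫ s in a..t, g s * A s‖ + ‖∫ s in a..t, g s * A s * A s‖ := by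
        rw [hparts, ← norm_mul]; exact norm_sub_le _ _
    _ ≤ ‖A t‖ * (∫ s in a..b, w s * ‖A s‖) + ∫ s in a..b, w s * ‖A s‖ ^ 2 := by gcongr

end intervalIntegral

theorem Complex.norm_exp_two_mul_I_mul_ofReal_le {μ : ℂ} {d c : ℝ} (hμ : |μ.im| ≤ d)
    (hc : |c| ≤ 1) : ‖exp (2 * I * μ * c)‖ ≤ Real.exp (2 * d) := by
  rw [norm_exp, Real.exp_le_exp]
  have hre : (2 * I * μ * c).re = -2 * (μ.im * c) := by simp; ring
  have hmul : |μ.im * c| ≤ d := by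
    rw [abs_mul]; nlinarith [abs_nonneg μ.im, abs_nonneg c]
  rw [hre]; linarith [neg_abs_le (μ.im * c)]

theorem MeasureTheory.MemLp.intervalIntegrable_of_Icc {E : Type*} [NormedAddCommGroup E]
    {f : ℝ → E} {p : ℝ≥0∞} {a b : ℝ} (hab : a ≤ b) (hp : 1 ≤ p)
    (hf : MemLp f p (volume.restrict (Icc a b))) : IntervalIntegrable f volume a b :=
  IntegrableOn.intervalIntegrable (by rw [uIcc_of_le hab]; exact hf.integrable hp)

def expPrimitive (μ : ℂ) (σ : ℝ → ℂ) (s : ℝ) : ℂ :=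
  ∫ y in (0:ℝ)..s, Complex.exp (2*Complex.I*μ*y) * σ y

section Strip

variable {σ₁ σ₂ : ℝ → ℂ} {μ : ℂ} {d : ℝ}

theorem continuousOn_expPrimitive (μ : ℂ) (h : IntervalIntegrable σ₂ volume 0 1) :
    ContinuousOn (expPrimitive μ σ₂) (uIcc 0 1) :=
  intervalIntegral.continuousOn_primitive_interval'
    (h.continuousOn_mul (by fun_prop : Continuous _).continuousOn) left_mem_uIcc

theorem continuousOn_alpha0 (μ : ℂ) (h₁ : IntervalIntegrable σ₁ volume 0 1)
    (h₂ : IntervalIntegrable σ₂ volume 0 1) : ContinuousOn (alpha0 σ₁ σ₂ μ) (uIcc 0 1) := by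
  have hprim : ∀ {σ : ℝ → ℂ}, IntervalIntegrable σ volume 0 1 → ∀ c : ℂ,
      ContinuousOn (fun x => ∫ t in (0:ℝ)..x, Complex.exp (c * t) * σ t) (uIcc 0 1) :=
    fun hσ c => intervalIntegral.continuousOn_primitive_interval'
      (hσ.continuousOn_mul (by fun_prop : Continuous _).continuousOn) left_mem_uIcc
  unfold alpha0
  simp only [← neg_mul]
  exact ((hprim h₁ _).norm.add (hprim h₁ _).norm).add ((hprim h₂ _).norm.add (hprim h₂ _).norm)

theorem integral_norm_mul_expPrimitive_sq_le_alphaT (μ : ℂ)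
    (h₁ : IntervalIntegrable σ₁ volume 0 1) (h₂ : IntervalIntegrable σ₂ volume 0 1) :
    ∫ s in (0:ℝ)..1, ‖σ₁ s‖ * ‖expPrimitive μ σ₂ s‖ ^ 2 ≤ alphaT σ₁ σ₂ μ := by
  have hmax : IntervalIntegrable (fun s => max ‖σ₁ s‖ ‖σ₂ s‖) volume 0 1 :=
    ⟨h₁.norm.1.sup h₂.norm.1, h₁.norm.2.sup h₂.norm.2⟩
  refine intervalIntegral.integral_mono_on zero_le_one
    (h₁.norm.mul_continuousOn ((continuousOn_expPrimitive μ h₂).norm.pow 2))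
    (hmax.mul_continuousOn ((continuousOn_alpha0 μ h₁ h₂).pow 2)) fun s _ => ?_
  have hle : ‖expPrimitive μ σ₂ s‖ ≤ alpha0 σ₁ σ₂ μ s := by
    simp only [alpha0, expPrimitive]
    linarith [norm_nonneg (∫ t in (0:ℝ)..s, Complex.exp (-(2*Complex.I*μ*t)) * σ₁ t),
      norm_nonneg (∫ t in (0:ℝ)..s, Complex.exp (2*Complex.I*μ*t) * σ₁ t),
      norm_nonneg (∫ t in (0:ℝ)..s, Complex.exp (-(2*Complex.I*μ*t)) * σ₂ t)]
  gcongr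
  exact le_max_left _ _

theorem Lfun_eq_integral_expPrimitive (σ₁ σ₂ : ℝ → ℂ) (μ : ℂ) (x : ℝ) :
    Lfun σ₁ σ₂ μ x = ∫ t in (0:ℝ)..x, Complex.exp (2*Complex.I*μ*(x - t)) * σ₁ t *
      ∫ s in (0:ℝ)..t, Complex.exp (2*Complex.I*μ*s) * σ₂ s *
        ∫ τ in (0:ℝ)..s, Complex.exp (-(2*Complex.I*μ*τ)) * σ₁ τ * expPrimitive μ σ₂ τ := by
  refine intervalIntegral.integral_congr fun t _ => congrArg _ ?_
  refine intervalIntegral.integral_congr fun s _ => ?_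
  rw [← intervalIntegral.integral_const_mul, ← intervalIntegral.integral_const_mul]
  congr 1 with τ
  rw [show 2*Complex.I*μ*(s - τ) = 2*Complex.I*μ*s + -(2*Complex.I*μ*τ) by ring, Complex.exp_add]
  simp only [expPrimitive]
  ring

theorem norm_integral_mul_integral_mul_expPrimitive_le (hμ : |μ.im| ≤ d)
    (h₁ : IntervalIntegrable σ₁ volume 0 1) (h₂ : IntervalIntegrable σ₂ volume 0 1)
    {t : ℝ} (ht : t ∈ Icc (0:ℝ) 1) :
    ‖∫ s in (0:ℝ)..t, Complex.exp (2*Complex.I*μ*s) * σ₂ s *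
        ∫ τ in (0:ℝ)..s, Complex.exp (-(2*Complex.I*μ*τ)) * σ₁ τ * expPrimitive μ σ₂ τ‖
      ≤ Real.exp (2*d) * (‖expPrimitive μ σ₂ t‖ * (∫ s in (0:ℝ)..1, ‖σ₁ s‖ * ‖expPrimitive μ σ₂ s‖)
        + ∫ s in (0:ℝ)..1, ‖σ₁ s‖ * ‖expPrimitive μ σ₂ s‖ ^ 2) := by
  have hg : ∀ τ ∈ Icc (0:ℝ) 1,
      ‖Complex.exp (-(2*Complex.I*μ*τ)) * σ₁ τ‖ ≤ Real.exp (2*d) * ‖σ₁ τ‖ := by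
    intro τ hτ
    rw [norm_mul, show -(2*Complex.I*μ*τ) = 2*Complex.I*μ*((-τ : ℝ) : ℂ) by push_cast; ring]
    gcongr
    exact Complex.norm_exp_two_mul_I_mul_ofReal_le hμ
      (by rw [abs_neg, abs_le]; constructor <;> linarith [hτ.1, hτ.2])
  have hbound := intervalIntegral.norm_integral_mul_integral_mul_primitive_le ht.1 ht.2
    (f := fun s => Complex.exp (2*Complex.I*μ*s) * σ₂ s)
    (g := fun τ => Complex.exp (-(2*Complex.I*μ*τ)) * σ₁ τ)
    (h₂.continuousOn_mul (by fun_prop)) (h₁.continuousOn_mul (by fun_prop))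
    (h₁.norm.const_mul _) hg
  simp only [mul_assoc (Real.exp (2*d)), intervalIntegral.integral_const_mul] at hbound
  simp only [expPrimitive]
  linarith

theorem norm_Lfun_le (hμ : |μ.im| ≤ d) (h₁ : IntervalIntegrable σ₁ volume 0 1)
    (h₂ : IntervalIntegrable σ₂ volume 0 1) {x : ℝ} (hx : x ∈ Icc (0:ℝ) 1) :
    ‖Lfun σ₁ σ₂ μ x‖ ≤ Real.exp (2*d) ^ 2 * ∫ t in (0:ℝ)..1, ‖σ₁ t‖ *
      (‖expPrimitive μ σ₂ t‖ * (∫ s in (0:ℝ)..1, ‖σ₁ s‖ * ‖expPrimitive μ σ₂ s‖)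
        + ∫ s in (0:ℝ)..1, ‖σ₁ s‖ * ‖expPrimitive μ σ₂ s‖ ^ 2) := by
  set A := expPrimitive μ σ₂
  set J := ∫ s in (0:ℝ)..1, ‖σ₁ s‖ * ‖A s‖
  set K := ∫ s in (0:ℝ)..1, ‖σ₁ s‖ * ‖A s‖ ^ 2
  have hA := (continuousOn_expPrimitive μ h₂).norm
  rw [Lfun_eq_integral_expPrimitive, ← intervalIntegral.integral_const_mul]
  refine intervalIntegral.norm_integral_le_integral_of_norm_le_of_le hx.1 hx.2
    (((h₁.norm.mul_continuousOn ((hA.mul continuousOn_const).add continuousOn_const)).const_mul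
      _)) fun t ht => ?_
  have hxt : ‖Complex.exp (2*Complex.I*μ*((x - t : ℝ) : ℂ))‖ ≤ Real.exp (2*d) :=
    Complex.norm_exp_two_mul_I_mul_ofReal_le hμ
      (abs_le.mpr ⟨by linarith [ht.2, hx.1], by linarith [ht.1, hx.2]⟩)
  push_cast at hxt
  rw [norm_mul, norm_mul]
  calc _ ≤ Real.exp (2*d) * ‖σ₁ t‖ * (Real.exp (2*d) * (‖A t‖ * J + K)) := by
        gcongr
        exact norm_integral_mul_integral_mul_expPrimitive_le hμ h₁ h₂ ht
    _ = _ := by ring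

end Strip

theorem stmt19_general
    (p : ℝ≥0∞) (hp1 : 1 ≤ p)
    (σ₁ σ₂ : ℝ → ℂ)
    (hσ₁ : MemLp σ₁ p (volume.restrict (Icc (0:ℝ) 1)))
    (hσ₂ : MemLp σ₂ p (volume.restrict (Icc (0:ℝ) 1)))
    (d : ℝ) :
    ∀ μ : ℂ, |μ.im| ≤ d → ∀ x ∈ Icc (0:ℝ) 1,
      ‖Lfun σ₁ σ₂ μ x‖
        ≤ 2 * Real.exp (4*d) * (∫ t in (0:ℝ)..1, ‖σ₁ t‖) * alphaT σ₁ σ₂ μ := by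
  intro μ hμ x hx
  have h₁ := hσ₁.intervalIntegrable_of_Icc zero_le_one hp1
  have h₂ := hσ₂.intervalIntegrable_of_Icc zero_le_one hp1
  set S := ∫ t in (0:ℝ)..1, ‖σ₁ t‖
  set K := ∫ s in (0:ℝ)..1, ‖σ₁ s‖ * ‖expPrimitive μ σ₂ s‖ ^ 2
  have hS : 0 ≤ S := intervalIntegral.integral_nonneg zero_le_one fun _ _ => norm_nonneg _
  have hK : K ≤ alphaT σ₁ σ₂ μ := integral_norm_mul_expPrimitive_sq_le_alphaT μ h₁ h₂
  have hE : Real.exp (2*d) ^ 2 = Real.exp (4*d) := by rw [← Real.exp_nat_mul]; ring_nf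
  calc ‖Lfun σ₁ σ₂ μ x‖ ≤ Real.exp (2*d) ^ 2 * (2 * S * K) :=
        (norm_Lfun_le hμ h₁ h₂ hx).trans (by
          gcongr
          exact intervalIntegral.integral_mul_mul_integral_add_integral_le zero_le_one
            (fun _ _ => norm_nonneg _) h₁.norm (continuousOn_expPrimitive μ h₂).norm)
    _ = 2 * Real.exp (4*d) * S * K := by rw [← hE]; ring
    _ ≤ 2 * Real.exp (4*d) * S * alphaT σ₁ σ₂ μ := by gcongr

/-- bound for `L(x,μ)` in the strip `|Im μ| ≤ d`. -/
theorem stmt19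
    (p : ℝ≥0∞) (hp1 : 1 ≤ p) (hp2 : p < 2)
    (σ₁ σ₂ : ℝ → ℂ) (hσ₁m : Measurable σ₁) (hσ₂m : Measurable σ₂)
    (hσ₁ : MemLp σ₁ p (volume.restrict (Icc (0:ℝ) 1)))
    (hσ₂ : MemLp σ₂ p (volume.restrict (Icc (0:ℝ) 1)))
    (d : ℝ) (hd : 0 < d) :
    ∀ μ : ℂ, |μ.im| ≤ d → ∀ x ∈ Icc (0:ℝ) 1,
      ‖Lfun σ₁ σ₂ μ x‖
        ≤ 2 * Real.exp (4*d) * (∫ t in (0:ℝ)..1, ‖σ₁ t‖) * alphaT σ₁ σ₂ μ :=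
  stmt19_general p hp1 σ₁ σ₂ hσ₁ hσ₂ d
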